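/- Let X be a topological space and n ≥ 1. Let L₁, L₂ be unitary loops and C₁, C₂ gapped constant evolutions on X with values in n×n complex unitary matrices. Then L₁*C₁ and L₂*C₂ are homotopic through unitary evolutions gapped at 0 and π if and only if L₁ is homotopic to L₂ through unitary loops and C₁ is homotopic to C₂ through gapped constant evolutions. -/

import Mathlib

open Matrix Set

/-- A unitary evolution on `X`: a continuous map `U : X × [0,1] → Matrix n n ℂ` with every
`U (x,t)` unitary and `U (x,0) = 1`. -/
def IsUnitaryEvolution {X : Type*} [TopologicalSpace X] {n : ℕ}
    (U : X × unitInterval → Matrix (Fin n) (Fin n) ℂ) : Prop :=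
  Continuous U ∧ (∀ p, U p ∈ Matrix.unitaryGroup (Fin n) ℂ) ∧ ∀ x, U (x, 0) = 1

/-- A unitary evolution gapped at 0 and π: neither 1 nor -1 is an eigenvalue of `U (x,1)`. -/
def IsGappedEvolution {X : Type*} [TopologicalSpace X] {n : ℕ}
    (U : X × unitInterval → Matrix (Fin n) (Fin n) ℂ) : Prop :=
  IsUnitaryEvolution U ∧
    ∀ x, (1 : ℂ) ∉ spectrum ℂ (U (x, 1)) ∧ (-1 : ℂ) ∉ spectrum ℂ (U (x, 1))

/-- A unitary loop: a unitary evolution with `U (x,1) = 1` for all `x`. -/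
def IsUnitaryLoop {X : Type*} [TopologicalSpace X] {n : ℕ}
    (U : X × unitInterval → Matrix (Fin n) (Fin n) ℂ) : Prop :=
  IsUnitaryEvolution U ∧ ∀ x, U (x, 1) = 1

/-- A continuous family of Hermitian matrices, all of whose eigenvalues are real and lie in
`(-π, π) \ {0}`. -/
def IsGappedHermitianFamily {X : Type*} [TopologicalSpace X] {n : ℕ}
    (H : X → Matrix (Fin n) (Fin n) ℂ) : Prop :=
  Continuous H ∧ ∀ x, (H x).IsHermitian ∧
    ∀ z ∈ spectrum ℂ (H x), ∃ r : ℝ,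
      z = (r : ℂ) ∧ r ∈ Set.Ioo (-Real.pi) Real.pi ∧ r ≠ 0

/-- The constant evolution generated by a static Hamiltonian family:
`C (x,t) = exp (-i t H x)`. -/
noncomputable def constEvol {X : Type*} [TopologicalSpace X] {n : ℕ}
    (H : X → Matrix (Fin n) (Fin n) ℂ) : X × unitInterval → Matrix (Fin n) (Fin n) ℂ :=
  fun p => NormedSpace.exp ((-(((p.2 : ℝ) : ℂ) * Complex.I)) • H p.1)

/-- A gapped constant evolution. -/
def IsGappedConstantEvolution {X : Type*} [TopologicalSpace X] {n : ℕ}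
    (U : X × unitInterval → Matrix (Fin n) (Fin n) ℂ) : Prop :=
  ∃ H : X → Matrix (Fin n) (Fin n) ℂ, IsGappedHermitianFamily H ∧ U = constEvol H

/-- Composition of unitary evolutions: run `U₁` at double speed on `[0,1/2]`, then `U₂`
(multiplied by the endpoint of `U₁`) on `[1/2,1]`. -/
noncomputable def compEvol {X : Type*} [TopologicalSpace X] {n : ℕ}
    (U₁ U₂ : X × unitInterval → Matrix (Fin n) (Fin n) ℂ) :
    X × unitInterval → Matrix (Fin n) (Fin n) ℂ :=
  fun p =>
    if (p.2 : ℝ) ≤ 1 / 2 then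
      U₁ (p.1, Set.projIcc 0 1 zero_le_one (2 * (p.2 : ℝ)))
    else
      U₂ (p.1, Set.projIcc 0 1 zero_le_one (2 * (p.2 : ℝ) - 1)) * U₁ (p.1, 1)

/-- Homotopy through maps satisfying the property `Q`. -/
def HomotopicThrough {Y α : Type*} [TopologicalSpace Y] [TopologicalSpace α]
    (Q : (Y → α) → Prop) (f g : Y → α) : Prop :=
  ∃ h : unitInterval × Y → α, Continuous h ∧ (∀ s, Q fun y => h (s, y)) ∧
    (∀ y, h (0, y) = f y) ∧ (∀ y, h (1, y) = g y)

/-!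
A homotopy `U_s` of gapped evolutions yields, through the endpoints, a continuous family of
effective Hamiltonians `H_s = i log U_s(1)` (principal branch of `log`): the logarithm is continuous
on the spectra because `-1` is never an eigenvalue, `H_s` is selfadjoint because `U_s(1)` is
unitary, and its spectrum avoids `0` and `±π` because neither `1` nor `-1` is an eigenvalue.
At `s = 0, 1` these are the Hamiltonians of `C₁, C₂`, since `L * C` ends where `C` does: this is
the homotopy of the constant parts. Multiplying `U_s(t)` by `exp (i t H_s)` turns every `U_s` into
a loop, and `(L * C) · exp (i t H)` is loop-homotopic to `L`: this is the homotopy of the loops.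
Conversely, composing homotopies of the two parts pointwise is a homotopy of gapped evolutions.
-/

open Complex NormedSpace

namespace Complex

lemma ofReal_mul_I_mem_skewAdjoint (t : ℝ) : (t : ℂ) * I ∈ skewAdjoint ℂ :=
  skewAdjoint.mem_iff.2 (by simp)

lemma I_mul_log_of_norm_eq_one {z : ℂ} (hz : ‖z‖ = 1) : I * log z = ↑(-arg z) := by
  rw [log, hz, Real.log_one]
  push_cast
  ring_nf
  rw [I_sq]
  ring

lemma continuousOn_I_mul_log : ContinuousOn (fun z : ℂ => I * log z) slitPlane :=
  fun _ hz => (continuousAt_const.mul (continuousAt_clog hz)).continuousWithinAt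

lemma log_exp_neg_I_mul {r : ℝ} (hr : r ∈ Ioo (-Real.pi) Real.pi) :
    log (exp (-I * r)) = -I * r := by
  have him : (-I * r).im = -r := by simp
  exact log_exp (by rw [him]; linarith [hr.2]) (by rw [him]; linarith [hr.1])

end Complex

section BanachAlgebra

variable {A : Type*} [NormedRing A] [NormedAlgebra ℂ A] [CompleteSpace A]

lemma exp_smul_mul_exp_smul (a b : ℂ) (H : A) :
    exp (a • H) * exp (b • H) = exp ((a + b) • H) := by
  let : NormedAlgebra ℚ A := .restrictScalars ℚ ℂ A
  rw [add_smul, exp_add_of_commute (((Commute.refl H).smul_left a).smul_right b)]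

lemma continuous_exp_smul {Y : Type*} [TopologicalSpace Y] {c : Y → ℂ} {H : Y → A}
    (hc : Continuous c) (hH : Continuous H) : Continuous fun y => exp (c y • H y) :=
  let : NormedAlgebra ℚ A := .restrictScalars ℚ ℂ A
  exp_continuous.comp (hc.smul hH)

end BanachAlgebra

section CStarAlgebra

variable {A : Type*} [CStarAlgebra A]

/-- The effective Hamiltonian `i log u` (principal branch): if `u` is unitary and `-1 ∉ σ(u)`,
then `exp (-i • effectiveHamiltonian u) = u`. -/
noncomputable def effectiveHamiltonian (u : A) : A := cfc (fun z : ℂ => I * log z) u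

def IsGappedUnitary (u : A) : Prop :=
  u ∈ unitary A ∧ (1 : ℂ) ∉ spectrum ℂ u ∧ (-1 : ℂ) ∉ spectrum ℂ u

def HasGappedSpectrum (H : A) : Prop :=
  ∀ z ∈ spectrum ℂ H, ∃ r : ℝ, z = r ∧ r ∈ Ioo (-Real.pi) Real.pi ∧ r ≠ 0

lemma exp_smul_mem_unitary {H : A} (hH : IsSelfAdjoint H) {c : ℂ} (hc : c ∈ skewAdjoint ℂ) :
    exp (c • H) ∈ unitary A :=
  let : NormedAlgebra ℚ A := .restrictScalars ℚ ℂ A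
  exp_mem_unitary_of_mem_skewAdjoint (hH.smul_mem_skewAdjoint hc)

lemma exp_cfc {a : A} [IsStarNormal a] (g : ℂ → ℂ) (hg : ContinuousOn g (spectrum ℂ a)) :
    exp (cfc g a) = cfc (fun z => Complex.exp (g z)) a := by
  rw [← CFC.complex_exp_eq_normedSpace_exp (cfc_predicate g a), cfc_comp' Complex.exp g a]

lemma exp_smul_eq_cfc {a : A} [IsStarNormal a] (c : ℂ) :
    exp (c • a) = cfc (fun z => Complex.exp (c * z)) a := by
  rw [← cfc_const_mul_id c a, exp_cfc _ (by fun_prop)]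

lemma spectrum_subset_slitPlane {u : A} (hu : u ∈ unitary A)
    (h : (-1 : ℂ) ∉ spectrum ℂ u) : spectrum ℂ u ⊆ slitPlane :=
  (subset_slitPlane_iff_of_subset_sphere (spectrum.subset_circle_of_unitary hu)).2
    (by simpa using h)

lemma isSelfAdjoint_effectiveHamiltonian {u : A} (hu : u ∈ unitary A) :
    IsSelfAdjoint (effectiveHamiltonian u) := by
  have := isStarNormal_of_mem_unitary hu
  rw [isSelfAdjoint_iff, effectiveHamiltonian, ← cfc_star]
  refine cfc_congr fun z hz => ?_
  rw [I_mul_log_of_norm_eq_one (spectrum.norm_eq_one_of_unitary hu hz), star_def, conj_ofReal]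

lemma IsGappedUnitary.hasGappedSpectrum_effectiveHamiltonian {u : A} (hu : IsGappedUnitary u) :
    HasGappedSpectrum (effectiveHamiltonian u) := by
  obtain ⟨hu, h1, hm1⟩ := hu
  have := isStarNormal_of_mem_unitary hu
  have hslit := spectrum_subset_slitPlane hu hm1
  intro w hw
  rw [effectiveHamiltonian, cfc_map_spectrum _ u this (continuousOn_I_mul_log.mono hslit)] at hw
  obtain ⟨z, hz, rfl⟩ := hw
  have hz1 := spectrum.norm_eq_one_of_unitary hu hz
  have hpi : arg z ≠ Real.pi := (mem_slitPlane_iff_arg.1 (hslit hz)).1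
  have h0 : arg z ≠ 0 := by
    intro h
    have := norm_mul_exp_arg_mul_I z
    rw [hz1, h] at this
    have hz_one : z = 1 := by simpa using this.symm
    exact h1 (hz_one ▸ hz)
  refine ⟨-arg z, I_mul_log_of_norm_eq_one hz1, ⟨?_, ?_⟩, neg_ne_zero.2 h0⟩
  · linarith [(arg_le_pi z).lt_of_ne hpi]
  · linarith [neg_pi_lt_arg z]

lemma exp_I_smul_effectiveHamiltonian {u : A} (hu : u ∈ unitary A)
    (h : (-1 : ℂ) ∉ spectrum ℂ u) : exp (I • effectiveHamiltonian u) = star u := by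
  have := isStarNormal_of_mem_unitary hu
  have hcont := continuousOn_I_mul_log.mono (spectrum_subset_slitPlane hu h)
  rw [effectiveHamiltonian, ← cfc_const_mul _ _ _ hcont,
    exp_cfc (fun z => I * (I * log z)) (continuousOn_const.mul hcont), ← cfc_star_id (R := ℂ) u]
  refine cfc_congr fun z hz => ?_
  have hz1 := spectrum.norm_eq_one_of_unitary hu hz
  rw [← mul_assoc, I_mul_I, neg_one_mul, Complex.exp_neg,
    exp_log (norm_ne_zero_iff.1 (by simp [hz1])), inv_eq_conj hz1]
  rfl

lemma Continuous.effectiveHamiltonian {X : Type*} [TopologicalSpace X] {u : X → A}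
    (hu : Continuous u) (hunit : ∀ x, u x ∈ unitary A)
    (h : ∀ x, (-1 : ℂ) ∉ spectrum ℂ (u x)) :
    Continuous fun x => effectiveHamiltonian (u x) :=
  have := fun x => isStarNormal_of_mem_unitary (hunit x)
  hu.cfc_of_mem_nhdsSet _ (isOpen_slitPlane.mem_nhdsSet.2 <|
    iUnion_subset fun x => spectrum_subset_slitPlane (hunit x) (h x)) this continuousOn_I_mul_log

lemma HasGappedSpectrum.isGappedUnitary_exp {H : A} (hH : IsSelfAdjoint H)
    (hs : HasGappedSpectrum H) : IsGappedUnitary (exp ((-I) • H)) := by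
  have := hH.isStarNormal
  have hI : -I ∈ skewAdjoint ℂ := by simpa using ofReal_mul_I_mem_skewAdjoint (-1)
  have harg : ∀ r ∈ Ioo (-Real.pi) Real.pi, arg (Complex.exp (-I * r)) = -r := fun r hr => by
    rw [← log_im, log_exp_neg_I_mul hr]
    simp
  refine ⟨exp_smul_mem_unitary hH hI, ?_⟩
  rw [exp_smul_eq_cfc, cfc_map_spectrum _ H]
  refine ⟨fun ⟨z, hz, hexp⟩ => ?_, fun ⟨z, hz, hexp⟩ => ?_⟩ <;>
    obtain ⟨r, rfl, hr, hr0⟩ := hs z hz <;> have := harg r hr <;> simp only at hexp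
  · rw [hexp, arg_one] at this
    exact hr0 (by linarith)
  · rw [hexp, arg_neg_one] at this
    linarith [hr.1]

lemma effectiveHamiltonian_exp {H : A} (hH : IsSelfAdjoint H) (hs : HasGappedSpectrum H) :
    effectiveHamiltonian (exp ((-I) • H)) = H := by
  have := hH.isStarNormal
  obtain ⟨hunit, -, hm1⟩ := hs.isGappedUnitary_exp hH
  have hcont := continuousOn_I_mul_log.mono (spectrum_subset_slitPlane hunit hm1)
  rw [exp_smul_eq_cfc, cfc_map_spectrum _ H] at hcont
  rw [exp_smul_eq_cfc, effectiveHamiltonian, ← cfc_comp' (fun z => I * log z) _ H hcont]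
  conv_rhs => rw [← cfc_id' ℂ H]
  refine cfc_congr fun z hz => ?_
  obtain ⟨r, rfl, hr, -⟩ := hs z hz
  rw [log_exp_neg_I_mul hr, ← mul_assoc, mul_neg, I_mul_I, neg_neg, one_mul]

end CStarAlgebra

namespace HomotopicThrough

variable {Y α : Type*} [TopologicalSpace Y] [TopologicalSpace α] {Q : (Y → α) → Prop}
  {f g k : Y → α}

lemma symm (h : HomotopicThrough Q f g) : HomotopicThrough Q g f := by
  obtain ⟨H, hH, hQ, h0, h1⟩ := h
  exact ⟨fun p => H (unitInterval.symm p.1, p.2), by fun_prop, fun s => hQ (unitInterval.symm s),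
    by simpa using h1, by simpa using h0⟩

lemma trans (h₁ : HomotopicThrough Q f g) (h₂ : HomotopicThrough Q g k) :
    HomotopicThrough Q f k := by
  obtain ⟨a, ha, haQ, ha0, ha1⟩ := h₁
  obtain ⟨b, hb, hbQ, hb0, hb1⟩ := h₂
  refine ⟨fun p => if (p.1 : ℝ) ≤ 1 / 2 then a (projIcc 0 1 zero_le_one (2 * p.1), p.2)
      else b (projIcc 0 1 zero_le_one (2 * p.1 - 1), p.2), ?_, fun s => ?_, fun y => ?_,
      fun y => ?_⟩
  · refine Continuous.if_le (by fun_prop) (by fun_prop) (by fun_prop) continuous_const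
      fun p hp => ?_
    simp [hp, ha1, hb0]
  · dsimp only
    split_ifs
    exacts [haQ _, hbQ _]
  · simp [ha0]
  · norm_num [hb1]

end HomotopicThrough

section Evolution

open scoped Matrix.Norms.L2Operator

variable {X : Type*} [TopologicalSpace X] {n : ℕ}

local notation "Mₙ" => Matrix (Fin n) (Fin n) ℂ

lemma constEvol_apply_zero (H : X → Mₙ) (x : X) : constEvol H (x, 0) = 1 := by
  simp [constEvol]

lemma constEvol_apply_one (H : X → Mₙ) (x : X) : constEvol H (x, 1) = exp ((-I) • H x) := by
  simp [constEvol]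

lemma continuous_constEvol {H : X → Mₙ} (hH : Continuous H) : Continuous (constEvol H) :=
  continuous_exp_smul (by fun_prop) (hH.comp continuous_fst)

lemma constEvol_mem_unitaryGroup {H : X → Mₙ} (hH : ∀ x, IsSelfAdjoint (H x))
    (p : X × unitInterval) : constEvol H p ∈ Matrix.unitaryGroup (Fin n) ℂ :=
  exp_smul_mem_unitary (hH p.1) (neg_mem (ofReal_mul_I_mem_skewAdjoint _))

lemma IsGappedHermitianFamily.isSelfAdjoint {H : X → Mₙ} (hH : IsGappedHermitianFamily H)
    (x : X) : IsSelfAdjoint (H x) :=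
  (hH.2 x).1.isSelfAdjoint

lemma IsGappedHermitianFamily.isGappedUnitary_constEvol_apply_one {H : X → Mₙ}
    (hH : IsGappedHermitianFamily H) (x : X) : IsGappedUnitary (constEvol H (x, 1)) := by
  rw [constEvol_apply_one]
  exact HasGappedSpectrum.isGappedUnitary_exp (hH.isSelfAdjoint x) (hH.2 x).2

lemma IsGappedHermitianFamily.effectiveHamiltonian_constEvol_apply_one {H : X → Mₙ}
    (hH : IsGappedHermitianFamily H) (x : X) : effectiveHamiltonian (constEvol H (x, 1)) = H x := by
  rw [constEvol_apply_one]
  exact effectiveHamiltonian_exp (hH.isSelfAdjoint x) (hH.2 x).2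

lemma IsGappedHermitianFamily.comp {Y : Type*} [TopologicalSpace Y] {H : X → Mₙ}
    (hH : IsGappedHermitianFamily H) {f : Y → X} (hf : Continuous f) :
    IsGappedHermitianFamily (H ∘ f) :=
  ⟨hH.1.comp hf, fun y => hH.2 (f y)⟩

lemma IsGappedConstantEvolution.isUnitaryEvolution {C : X × unitInterval → Mₙ}
    (hC : IsGappedConstantEvolution C) : IsUnitaryEvolution C := by
  obtain ⟨H, hH, rfl⟩ := hC
  exact ⟨continuous_constEvol hH.1, constEvol_mem_unitaryGroup hH.isSelfAdjoint,
    constEvol_apply_zero H⟩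

lemma compEvol_of_le (U V : X × unitInterval → Mₙ) (x : X) {t : unitInterval}
    (ht : (t : ℝ) ≤ 1 / 2) : compEvol U V (x, t) = U (x, projIcc 0 1 zero_le_one (2 * t)) :=
  if_pos ht

lemma compEvol_of_gt (U V : X × unitInterval → Mₙ) (x : X) {t : unitInterval}
    (ht : 1 / 2 < (t : ℝ)) :
    compEvol U V (x, t) = V (x, projIcc 0 1 zero_le_one (2 * t - 1)) * U (x, 1) :=
  if_neg ht.not_ge

lemma compEvol_apply_zero (U V : X × unitInterval → Mₙ) (x : X) :
    compEvol U V (x, 0) = U (x, 0) := by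
  simp [compEvol_of_le]

lemma compEvol_apply_one (U V : X × unitInterval → Mₙ) (x : X) :
    compEvol U V (x, 1) = V (x, 1) * U (x, 1) := by
  rw [compEvol_of_gt U V x (by norm_num)]
  norm_num

lemma continuous_compEvol {U V : X × unitInterval → Mₙ} (hU : Continuous U) (hV : Continuous V)
    (hV0 : ∀ x, V (x, 0) = 1) : Continuous (compEvol U V) := by
  refine Continuous.if_le (by fun_prop) (by fun_prop) (by fun_prop) continuous_const ?_
  intro p hp
  simp [hp, hV0]

lemma IsUnitaryEvolution.compEvol {U V : X × unitInterval → Mₙ} (hU : IsUnitaryEvolution U)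
    (hV : IsUnitaryEvolution V) : IsUnitaryEvolution (compEvol U V) := by
  refine ⟨continuous_compEvol hU.1 hV.1 hV.2.2, fun p => ?_, fun x => ?_⟩
  · obtain ⟨x, t⟩ := p
    rcases le_or_gt (t : ℝ) (1 / 2) with ht | ht
    · rw [compEvol_of_le U V x ht]
      exact hU.2.1 _
    · rw [compEvol_of_gt U V x ht]
      exact mul_mem (hV.2.1 _) (hU.2.1 _)
  · rw [compEvol_apply_zero]
    exact hU.2.2 x

lemma IsUnitaryLoop.isGappedEvolution_compEvol {L C : X × unitInterval → Mₙ}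
    (hL : IsUnitaryLoop L) (hC : IsGappedConstantEvolution C) :
    IsGappedEvolution (compEvol L C) := by
  refine ⟨hL.1.compEvol hC.isUnitaryEvolution, fun x => ?_⟩
  obtain ⟨H, hH, rfl⟩ := hC
  rw [compEvol_apply_one, hL.2 x, mul_one]
  exact (hH.isGappedUnitary_constEvol_apply_one x).2

lemma IsUnitaryLoop.effectiveHamiltonian_compEvol_constEvol_apply_one
    {L : X × unitInterval → Mₙ} {H : X → Mₙ} (hL : IsUnitaryLoop L)
    (hH : IsGappedHermitianFamily H) (x : X) :
    effectiveHamiltonian (compEvol L (constEvol H) (x, 1)) = H x := by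
  rw [compEvol_apply_one, hL.2 x, mul_one, hH.effectiveHamiltonian_constEvol_apply_one]

lemma IsGappedEvolution.isGappedUnitary_apply_one {U : X × unitInterval → Mₙ}
    (hU : IsGappedEvolution U) (x : X) : IsGappedUnitary (U (x, 1)) :=
  ⟨hU.1.2.1 _, hU.2 x⟩

lemma isGappedHermitianFamily_effectiveHamiltonian {u : X → Mₙ} (hu : Continuous u)
    (hgap : ∀ x, IsGappedUnitary (u x)) :
    IsGappedHermitianFamily fun x => effectiveHamiltonian (u x) :=
  ⟨hu.effectiveHamiltonian (fun x => (hgap x).1) (fun x => (hgap x).2.2), fun x =>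
    ⟨(isSelfAdjoint_effectiveHamiltonian (hgap x).1).isHermitian,
      (hgap x).hasGappedSpectrum_effectiveHamiltonian⟩⟩

lemma IsGappedEvolution.isUnitaryLoop_mul_exp_effectiveHamiltonian {U : X × unitInterval → Mₙ}
    (hU : IsGappedEvolution U) :
    IsUnitaryLoop fun p =>
      U p * exp ((((p.2 : ℝ) : ℂ) * I) • effectiveHamiltonian (U (p.1, 1))) := by
  obtain ⟨hUc, hUu, hU0⟩ := hU.1
  have hK := isGappedHermitianFamily_effectiveHamiltonian (hUc.comp (by fun_prop))
    hU.isGappedUnitary_apply_one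
  refine ⟨⟨hUc.mul (continuous_exp_smul (by fun_prop) (hK.1.comp continuous_fst)), fun p => ?_,
    fun x => by simp [hU0]⟩, fun x => ?_⟩
  · exact mul_mem (hUu p) (exp_smul_mem_unitary (hK.isSelfAdjoint _)
      (ofReal_mul_I_mem_skewAdjoint _))
  · have hx := hU.isGappedUnitary_apply_one x
    simp only [Set.Icc.coe_one, ofReal_one, one_mul]
    rw [exp_I_smul_effectiveHamiltonian hx.1 hx.2.2, Unitary.mul_star_self_of_mem hx.1]

lemma homotopicThrough_compEvol {L₁ L₂ C₁ C₂ : X × unitInterval → Mₙ}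
    (hL : HomotopicThrough IsUnitaryLoop L₁ L₂)
    (hC : HomotopicThrough IsGappedConstantEvolution C₁ C₂) :
    HomotopicThrough IsGappedEvolution (compEvol L₁ C₁) (compEvol L₂ C₂) := by
  obtain ⟨a, ha, haQ, ha0, ha1⟩ := hL
  obtain ⟨b, hb, hbQ, hb0, hb1⟩ := hC
  refine ⟨fun p => compEvol (fun y => a (p.1, y)) (fun y => b (p.1, y)) p.2, ?_,
    fun s => (haQ s).isGappedEvolution_compEvol (hbQ s), fun y => by simp only [ha0, hb0],
    fun y => by simp only [ha1, hb1]⟩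
  -- the homotopy is itself a composition of evolutions, over the space `unitInterval × X`
  have := continuous_compEvol
    (U := fun q : (unitInterval × X) × unitInterval => a (q.1.1, q.1.2, q.2))
    (V := fun q => b (q.1.1, q.1.2, q.2)) (by fun_prop) (by fun_prop)
    fun q => (hbQ q.1).isUnitaryEvolution.2.2 q.2
  exact this.comp (by fun_prop :
    Continuous fun p : unitInterval × X × unitInterval => ((p.1, p.2.1), p.2.2))

lemma HomotopicThrough.constEvol_effectiveHamiltonian {U₀ U₁ : X × unitInterval → Mₙ}
    (h : HomotopicThrough IsGappedEvolution U₀ U₁) :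
    HomotopicThrough IsGappedConstantEvolution
      (constEvol fun x => effectiveHamiltonian (U₀ (x, 1)))
      (constEvol fun x => effectiveHamiltonian (U₁ (x, 1))) := by
  obtain ⟨h, hc, hQ, h0, h1⟩ := h
  have hK := isGappedHermitianFamily_effectiveHamiltonian
    (u := fun q : unitInterval × X => h (q.1, q.2, 1)) (hc.comp (by fun_prop))
    fun q => (hQ q.1).isGappedUnitary_apply_one q.2
  refine ⟨fun p => constEvol (fun x => effectiveHamiltonian (h (p.1, x, 1))) p.2,
    (continuous_constEvol hK.1).comp (by fun_prop :
      Continuous fun p : unitInterval × X × unitInterval => ((p.1, p.2.1), p.2.2)),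
    fun s => ⟨_, hK.comp (by fun_prop : Continuous fun x : X => (s, x)), rfl⟩,
    fun y => by simp only [h0], fun y => by simp only [h1]⟩

lemma HomotopicThrough.mul_exp_effectiveHamiltonian {U₀ U₁ : X × unitInterval → Mₙ}
    (h : HomotopicThrough IsGappedEvolution U₀ U₁) :
    HomotopicThrough IsUnitaryLoop
      (fun p => U₀ p * exp ((((p.2 : ℝ) : ℂ) * I) • effectiveHamiltonian (U₀ (p.1, 1))))
      (fun p => U₁ p * exp ((((p.2 : ℝ) : ℂ) * I) • effectiveHamiltonian (U₁ (p.1, 1))))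
    := by
  obtain ⟨h, hc, hQ, h0, h1⟩ := h
  have hK := isGappedHermitianFamily_effectiveHamiltonian
    (u := fun q : unitInterval × X => h (q.1, q.2, 1)) (hc.comp (by fun_prop))
    fun q => (hQ q.1).isGappedUnitary_apply_one q.2
  refine ⟨fun p => h p * exp ((((p.2.2 : ℝ) : ℂ) * I) •
      effectiveHamiltonian (h (p.1, p.2.1, 1))),
    hc.mul (continuous_exp_smul (by fun_prop) (hK.1.comp
      (by fun_prop : Continuous fun p : unitInterval × X × unitInterval => (p.1, p.2.1)))),
    fun s => (hQ s).isUnitaryLoop_mul_exp_effectiveHamiltonian,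
    fun y => by simp only [h0], fun y => by simp only [h1]⟩

lemma IsUnitaryLoop.homotopicThrough_compEvol_constEvol_mul_exp {L : X × unitInterval → Mₙ}
    {H : X → Mₙ} (hL : IsUnitaryLoop L) (hHc : Continuous H)
    (hHsa : ∀ x, IsSelfAdjoint (H x)) :
    HomotopicThrough IsUnitaryLoop L
      fun p => compEvol L (constEvol H) p * exp ((((p.2 : ℝ) : ℂ) * I) • H p.1) := by
  obtain ⟨⟨hLc, hLu, hL0⟩, hL1⟩ := hL
  -- at `s = 1` on the second half: `exp (-i (2t - 1) H) * exp (i t H) = exp (i (1 - t) H)`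
  let G : unitInterval × X × unitInterval → Mₙ := fun p =>
    L (p.2.1, projIcc 0 1 zero_le_one (min ((1 + p.1) * p.2.2) 1)) *
      exp ((((p.1 * min (p.2.2 : ℝ) (1 - p.2.2) : ℝ) : ℂ) * I) • H p.2.1)
  have hG : Continuous G :=
    (hLc.comp (by fun_prop)).mul (continuous_exp_smul (by fun_prop) (by fun_prop))
  refine ⟨G, hG, fun s => ⟨⟨hG.comp (by fun_prop), fun p => ?_, fun x => ?_⟩,
    fun x => ?_⟩, fun p => ?_, fun ⟨x, t⟩ => ?_⟩
  · exact mul_mem (hLu _) (exp_smul_mem_unitary (hHsa _) (ofReal_mul_I_mem_skewAdjoint _))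
  · simp [G, hL0]
  · simp [G, hL1, min_eq_right (le_add_of_nonneg_right s.2.1)]
  · simp [G, min_eq_left p.2.2.2]
  · show G (1, x, t) = compEvol L (constEvol H) (x, t) * _
    rcases le_or_gt (t : ℝ) (1 / 2) with ht | ht
    · have h₁ : min ((1 + 1) * (t : ℝ)) 1 = 2 * t := by rw [min_eq_left] <;> linarith
      have h₂ : min (t : ℝ) (1 - t) = t := min_eq_left (by linarith)
      rw [compEvol_of_le _ _ _ ht]
      simp only [G, Set.Icc.coe_one, one_mul, h₁, h₂]
    · rw [compEvol_of_gt _ _ _ ht, hL1, mul_one, constEvol, exp_smul_mul_exp_smul]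
      have h₁ : projIcc 0 1 zero_le_one (min ((1 + 1) * (t : ℝ)) 1) = 1 := by
        rw [min_eq_right (by linarith)]
        exact projIcc_right _
      have h₂ : min (t : ℝ) (1 - t) = 1 - t := min_eq_right (by linarith)
      have h₃ : (projIcc 0 1 zero_le_one (2 * (t : ℝ) - 1) : ℝ) = 2 * t - 1 :=
        congrArg Subtype.val (projIcc_of_mem _ ⟨by linarith, by linarith [t.2.2]⟩)
      simp only [G, Set.Icc.coe_one, one_mul, h₁, h₂, h₃, hL1]
      congr 2
      push_cast
      ring

end Evolution

theorem loop_comp_const_homotopic_iff_general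
    {X : Type*} [TopologicalSpace X] {n : ℕ}
    (L₁ L₂ C₁ C₂ : X × unitInterval → Matrix (Fin n) (Fin n) ℂ)
    (hL₁ : IsUnitaryLoop L₁) (hL₂ : IsUnitaryLoop L₂)
    (hC₁ : IsGappedConstantEvolution C₁) (hC₂ : IsGappedConstantEvolution C₂) :
    HomotopicThrough IsGappedEvolution (compEvol L₁ C₁) (compEvol L₂ C₂) ↔
      HomotopicThrough IsUnitaryLoop L₁ L₂ ∧
      HomotopicThrough IsGappedConstantEvolution C₁ C₂ := by
  obtain ⟨H₁, hH₁, rfl⟩ := hC₁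
  obtain ⟨H₂, hH₂, rfl⟩ := hC₂
  refine ⟨fun h => ⟨?_, ?_⟩, fun h => homotopicThrough_compEvol h.1 h.2⟩
  · have hW := h.mul_exp_effectiveHamiltonian
    simp only [hL₁.effectiveHamiltonian_compEvol_constEvol_apply_one hH₁,
      hL₂.effectiveHamiltonian_compEvol_constEvol_apply_one hH₂] at hW
    exact ((hL₁.homotopicThrough_compEvol_constEvol_mul_exp hH₁.1 hH₁.isSelfAdjoint).trans
      hW).trans (hL₂.homotopicThrough_compEvol_constEvol_mul_exp hH₂.1 hH₂.isSelfAdjoint).symm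
  · simpa only [hL₁.effectiveHamiltonian_compEvol_constEvol_apply_one hH₁,
      hL₂.effectiveHamiltonian_compEvol_constEvol_apply_one hH₂] using
      h.constEvol_effectiveHamiltonian

/-- `L₁*C₁` and `L₂*C₂` are homotopic through gapped unitary evolutions iff
`L₁ ≈ L₂` through unitary loops and `C₁ ≈ C₂` through gapped constant evolutions. -/
theorem loop_comp_const_homotopic_iff
    {X : Type*} [TopologicalSpace X] {n : ℕ} (hn : 1 ≤ n)
    (L₁ L₂ C₁ C₂ : X × unitInterval → Matrix (Fin n) (Fin n) ℂ)
    (hL₁ : IsUnitaryLoop L₁) (hL₂ : IsUnitaryLoop L₂)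
    (hC₁ : IsGappedConstantEvolution C₁) (hC₂ : IsGappedConstantEvolution C₂) :
    HomotopicThrough IsGappedEvolution (compEvol L₁ C₁) (compEvol L₂ C₂) ↔
      HomotopicThrough IsUnitaryLoop L₁ L₂ ∧
      HomotopicThrough IsGappedConstantEvolution C₁ C₂ :=
  loop_comp_const_homotopic_iff_general L₁ L₂ C₁ C₂ hL₁ hL₂ hC₁ hC₂
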